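/- Let T be a weighted tree and σ₁,…,σ_t weighted rooted trees whose total weights sum to at most w(T)/2. If T_i and T_j are shapes of T isomorphic to σ_i and σ_j respectively (i ≠ j), and some shape T_s of T is contained in both T_i and T_j, then T_i ⊆ T_j or T_j ⊆ T_i. -/

import Mathlib

/-!
Let `A` and `B` be the two shapes and `e_j = s(aj, bj)` the edge cut off by `B`. If neither
contains the other, pick `x ∈ A \ B` and `y ∈ B \ A`; a shape contained in both provides a
common vertex `z`. A walk from `z` to `y` inside `B` must leave `A`, hence pass through `ai`,
so `ai ∈ B`. A vertex `v` outside `A ∪ B` would lie, like `x`, on the far side of `e_j`, and a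
walk from `x` to `v` avoiding `e_j` would again pass through `ai`, putting `ai` on both sides of
the bridge `e_j`. So `A ∪ B` is the whole tree, and then `w(A) + w(B) ≥ w(T)`, which contradicts
`2 (w(A) + w(B)) ≤ w(T)` since `w(A) > 0`.
-/

open SimpleGraph

/-- The vertex set of the component of `T − s(a,b)` containing `a`. -/
def compSet {V : Type} (G : SimpleGraph V) (a b : V) : Set V :=
  {v | (G.deleteEdges {s(a, b)}).Reachable a v}

/-- `compSet G a b` is a *shape*. -/
def IsShape {V : Type} [Fintype V] (G : SimpleGraph V) (a b : V) : Prop :=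
  G.Adj a b ∧ 2 ≤ (compSet G a b).ncard ∧ (compSet G a b).ncard + 2 ≤ Fintype.card V

/-- Total weight of a set of vertices. -/
noncomputable def wsum {V : Type} (w : V → ℕ+) (S : Set V) : ℕ :=
  ∑ᶠ v ∈ S, (w v : ℕ)

section Shapes

variable {V : Type} {G : SimpleGraph V}

lemma mem_compSet_self (a b : V) : a ∈ compSet G a b := Reachable.refl a

lemma mem_compSet_swap {a b v : V} :
    v ∈ compSet G b a ↔ (G.deleteEdges {s(a, b)}).Reachable b v := by
  rw [compSet, Set.mem_ofPred_eq, Sym2.eq_swap]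

lemma SimpleGraph.Walk.mem_compSet_or_mem_compSet_swap {u v : V} (p : G.Walk u v) (a b : V)
    (hu : u ∈ compSet G a b ∨ u ∈ compSet G b a) :
    v ∈ compSet G a b ∨ v ∈ compSet G b a := by
  induction p with
  | nil => exact hu
  | @cons x y _ hxy p ih =>
    refine ih ?_
    by_cases he : s(x, y) = s(a, b)
    · rcases Sym2.eq_iff.mp he with ⟨rfl, rfl⟩ | ⟨rfl, rfl⟩
      · exact .inr (mem_compSet_self _ _)
      · exact .inl (mem_compSet_self _ _)
    · have hadj : (G.deleteEdges {s(a, b)}).Adj x y := deleteEdges_adj.mpr ⟨hxy, he⟩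
      rw [mem_compSet_swap (a := a) (b := b)] at hu ⊢
      exact hu.imp (·.trans hadj.reachable) (·.trans hadj.reachable)

lemma mem_compSet_swap_iff_notMem (hG : G.IsTree) {a b v : V} (hab : G.Adj a b) :
    v ∈ compSet G b a ↔ v ∉ compSet G a b := by
  refine ⟨fun hb ha => ?_, fun hv => ?_⟩
  · have hbridge : G.IsBridge s(a, b) := isAcyclic_iff_forall_adj_isBridge.mp hG.isAcyclic hab
    exact isBridge_iff.mp hbridge (ha.trans (mem_compSet_swap.mp hb).symm)
  · obtain ⟨p⟩ := hG.connected a v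
    exact (p.mem_compSet_or_mem_compSet_swap a b (.inl (mem_compSet_self a b))).resolve_left hv

lemma SimpleGraph.Walk.fst_mem_support_of_mem_compSet_of_notMem {H : SimpleGraph V} (hHG : H ≤ G)
    {a b u v : V} (p : H.Walk u v) (hu : u ∈ compSet G a b) (hv : v ∉ compSet G a b) :
    a ∈ p.support := by
  have he : s(a, b) ∈ (p.mapLe hHG).edges := by
    by_contra he
    exact hv (hu.trans (reachable_deleteEdges_iff_exists_walk.mpr ⟨_, he⟩))
  rw [Walk.edges_mapLe_eq_edges] at he
  exact p.fst_mem_support_of_mem_edges he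

lemma compSet_union_compSet_eq_univ (hG : G.IsTree) {ai bi aj bj z : V} (hj : G.Adj aj bj)
    (hz : z ∈ compSet G ai bi ∩ compSet G aj bj)
    (hAB : ¬ compSet G ai bi ⊆ compSet G aj bj) (hBA : ¬ compSet G aj bj ⊆ compSet G ai bi) :
    compSet G ai bi ∪ compSet G aj bj = Set.univ := by
  classical
  obtain ⟨x, hxA, hxB⟩ := Set.not_subset.mp hAB
  obtain ⟨y, hyB, hyA⟩ := Set.not_subset.mp hBA
  have hai_mem : ai ∈ compSet G aj bj := by
    obtain ⟨p⟩ := hz.2.symm.trans hyB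
    exact hz.2.trans ⟨p.takeUntil ai (p.fst_mem_support_of_mem_compSet_of_notMem
      (deleteEdges_le _) hz.1 hyA)⟩
  refine Set.eq_univ_of_forall fun v => by_contra fun hv => ?_
  rw [Set.mem_union, not_or] at hv
  have hx_far := (mem_compSet_swap_iff_notMem hG hj).mpr hxB
  obtain ⟨p⟩ := hx_far.symm.trans ((mem_compSet_swap_iff_notMem hG hj).mpr hv.2)
  have hai_far : ai ∈ compSet G bj aj := hx_far.trans
    ⟨p.takeUntil ai (p.fst_mem_support_of_mem_compSet_of_notMem (deleteEdges_le _) hxA hv.1)⟩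
  exact (mem_compSet_swap_iff_notMem hG hj).mp hai_far hai_mem

end Shapes

section Weights

variable {V : Type} (w : V → ℕ+)

lemma wsum_union_le {S T : Set V} (hS : S.Finite) (hT : T.Finite) :
    wsum w (S ∪ T) ≤ wsum w S + wsum w T := by
  have := finsum_mem_union_inter (f := fun v => (w v : ℕ)) hS hT
  unfold wsum
  omega

lemma wsum_univ [Fintype V] : wsum w Set.univ = ∑ v, (w v : ℕ) := by
  rw [wsum, finsum_mem_univ, finsum_eq_sum_of_fintype]

lemma wsum_pos {S : Set V} (hS : S.Finite) (hne : S.Nonempty) : 0 < wsum w S := by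
  rw [wsum, finsum_mem_eq_finite_toFinset_sum _ hS]
  exact Finset.sum_pos (fun v _ => (w v).pos) (by simpa using hne)

end Weights

theorem stmt_6_general {V : Type} [Fintype V] (G : SimpleGraph V) (hG : G.IsTree)
    (w : V → ℕ+) (ai bi aj bj as bs : V)
    (hj : IsShape G aj bj)
    (hweight : 2 * (wsum w (compSet G ai bi) + wsum w (compSet G aj bj)) ≤
      ∑ v, (w v : ℕ))
    (hsi : compSet G as bs ⊆ compSet G ai bi)
    (hsj : compSet G as bs ⊆ compSet G aj bj) :
    compSet G ai bi ⊆ compSet G aj bj ∨ compSet G aj bj ⊆ compSet G ai bi := by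
  by_contra hcon
  obtain ⟨hAB, hBA⟩ := not_or.mp hcon
  have hcover := compSet_union_compSet_eq_univ hG hj.1
    ⟨hsi (mem_compSet_self as bs), hsj (mem_compSet_self as bs)⟩ hAB hBA
  have htotal : ∑ v, (w v : ℕ) ≤ wsum w (compSet G ai bi) + wsum w (compSet G aj bj) := by
    rw [← wsum_univ, ← hcover]
    exact wsum_union_le w (Set.toFinite _) (Set.toFinite _)
  have hpos := wsum_pos w (Set.toFinite _) ⟨ai, mem_compSet_self (G := G) ai bi⟩
  omega

/-- if the total weights of `T_i` and `T_j` sum to at most `w(T)/2`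
(they are among shapes realizing an α-situation with α ≤ w(T)/2), and a shape `T_s`
of `T` is contained in both shapes `T_i` and `T_j`, then `T_i ⊆ T_j` or `T_j ⊆ T_i`. -/
theorem stmt_6 {V : Type} [Fintype V] (G : SimpleGraph V) (hG : G.IsTree)
    (w : V → ℕ+) (ai bi aj bj as bs : V)
    (hi : IsShape G ai bi) (hj : IsShape G aj bj) (hs : IsShape G as bs)
    (hweight : 2 * (wsum w (compSet G ai bi) + wsum w (compSet G aj bj)) ≤
      ∑ v, (w v : ℕ))
    (hsi : compSet G as bs ⊆ compSet G ai bi)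
    (hsj : compSet G as bs ⊆ compSet G aj bj) :
    compSet G ai bi ⊆ compSet G aj bj ∨ compSet G aj bj ⊆ compSet G ai bi :=
  stmt_6_general G hG w ai bi aj bj as bs hj hweight hsi hsj
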